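/- Let H be a finite-dimensional complex inner product space, Ĥ self-adjoint with nondegenerate ground state ψ₀, ground energy E₀, first excited energy E⁻, and highest energy E⁺. Suppose P is an orthogonal projection with 1 - ‖Pψ₀‖² ≤ 2D₀ for some D₀ ≥ 0 (with 2D₀ < 1), and φ_HF is a unit vector with 1 - |⟨ψ₀, φ_HF⟩|² ≥ S₀/N for some S₀ > 0 and positive integer N. Let E_D be the minimum of ⟨φ, Ĥφ⟩ over unit vectors φ in the range of P, and E_corr = ⟨φ_HF, Ĥφ_HF⟩ - E₀. Then (E_D - E₀)/E_corr ≤ 2N (E⁺ - E₀)/(E⁻ - E₀) · D₀/S₀, provided E_corr > 0. -/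

import Mathlib

/-
Expanding in an eigenbasis of Ĥ, a unit vector φ with ground-state overlap a = ⟪ψ₀, φ⟫ has energy
between E₀ + (E⁻ - E₀)(1 - |a|²) and E₀ + (E⁺ - E₀)(1 - |a|²): its component orthogonal to ψ₀ has
squared norm 1 - |a|² and only sees eigenvalues in [E⁻, E⁺]. The upper bound at the normalised
projection Pψ₀ / ‖Pψ₀‖, whose overlap with ψ₀ is ‖Pψ₀‖, gives E_D - E₀ ≤ 2D₀(E⁺ - E₀); the lower
bound at φ_HF gives E_corr ≥ (E⁻ - E₀) S₀ / N.
-/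

open scoped InnerProductSpace
open Module.End RCLike ComplexConjugate

section

variable {𝕜 E : Type*} [RCLike 𝕜] [NormedAddCommGroup E] [InnerProductSpace 𝕜 E]

theorem exists_eq_inner_smul_add_orthogonal {ψ : E} (hψ : ‖ψ‖ = 1) (φ : E) :
    ∃ χ, φ = ⟪ψ, φ⟫_𝕜 • ψ + χ ∧ ⟪ψ, χ⟫_𝕜 = 0 ∧ ‖φ‖ ^ 2 = ‖⟪ψ, φ⟫_𝕜‖ ^ 2 + ‖χ‖ ^ 2 := by
  set χ := φ - ⟪ψ, φ⟫_𝕜 • ψ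
  have hχ : ⟪ψ, χ⟫_𝕜 = 0 := by
    rw [inner_sub_right, inner_smul_right, inner_self_eq_norm_sq_to_K, hψ]
    simp
  have hφ : φ = ⟪ψ, φ⟫_𝕜 • ψ + χ := (add_sub_cancel _ φ).symm
  refine ⟨χ, hφ, hχ, ?_⟩
  conv_lhs => rw [hφ]
  simp only [sq]
  rw [norm_add_sq_eq_norm_sq_add_norm_sq_of_inner_eq_zero _ _
      (by rw [inner_smul_left, hχ, mul_zero]), norm_smul, hψ, mul_one]

end

namespace LinearMap.IsSymmetric

variable {𝕜 E : Type*} [RCLike 𝕜] [NormedAddCommGroup E] [InnerProductSpace 𝕜 E]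
  {T : E →ₗ[𝕜] E} {ψ : E} {E₀ : ℝ}

theorem re_inner_apply_self_smul_add {χ : E} (hT : T.IsSymmetric)
    (hψ : T ψ = (E₀ : 𝕜) • ψ) (hχ : ⟪ψ, χ⟫_𝕜 = 0) (a : 𝕜) :
    re ⟪a • ψ + χ, T (a • ψ + χ)⟫_𝕜 = E₀ * ‖a‖ ^ 2 * ‖ψ‖ ^ 2 + re ⟪χ, T χ⟫_𝕜 := by
  have hψTχ : ⟪ψ, T χ⟫_𝕜 = 0 := by rw [← hT, hψ, inner_smul_left, hχ, mul_zero]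
  have hχψ : ⟪χ, ψ⟫_𝕜 = 0 := inner_eq_zero_symm.mp hχ
  simp only [map_add, map_smul, hψ, inner_add_left, inner_add_right, inner_smul_left,
    inner_smul_right, hψTχ, hχψ, inner_self_eq_norm_sq_to_K]
  have : a * (E₀ * (conj a * ‖ψ‖ ^ 2)) = ((E₀ * ‖a‖ ^ 2 * ‖ψ‖ ^ 2 : ℝ) : 𝕜) := by
    push_cast
    rw [← RCLike.mul_conj]
    ring
  simp only [add_zero, mul_zero, map_zero, zero_add, this, ofReal_re]

theorem exists_norm_eq_one_apply_eq_self_norm_inner_eq {P : E →ₗ[𝕜] E} (hP : P.IsSymmetric)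
    (hP₂ : P ∘ₗ P = P) (hψ : P ψ ≠ 0) :
    ∃ φ, ‖φ‖ = 1 ∧ P φ = φ ∧ ‖⟪ψ, φ⟫_𝕜‖ = ‖P ψ‖ := by
  have hPP : P (P ψ) = P ψ := LinearMap.congr_fun hP₂ ψ
  refine ⟨(‖P ψ‖⁻¹ : 𝕜) • P ψ, norm_smul_inv_norm hψ, by rw [map_smul, hPP], ?_⟩
  rw [inner_smul_right, ← hPP, ← hP, hPP, inner_self_eq_norm_sq_to_K, norm_mul, norm_inv,
    norm_pow, norm_ofReal, abs_norm]
  field_simp [norm_ne_zero_iff.mpr hψ]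

variable [FiniteDimensional 𝕜 E]

theorem re_inner_apply_self_eq_sum (hT : T.IsSymmetric) {n : ℕ}
    (hn : Module.finrank 𝕜 E = n) (x : E) :
    re ⟪x, T x⟫_𝕜 = ∑ i, hT.eigenvalues hn i * ‖⟪hT.eigenvectorBasis hn i, x⟫_𝕜‖ ^ 2 := by
  rw [← (hT.eigenvectorBasis hn).sum_inner_mul_inner x (T x), map_sum]
  refine Finset.sum_congr rfl fun i _ => ?_
  rw [← hT, hT.apply_eigenvectorBasis, inner_smul_real_left, mul_smul_comm, RCLike.smul_re,
    inner_mul_symm_re_eq_norm, ← inner_conj_symm x, norm_mul, RCLike.norm_conj, sq]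

theorem mul_norm_sq_le_re_inner_apply_self (hT : T.IsSymmetric)
    {m : ℝ} {x : E} (hx : ∀ r : ℝ, r < m → ∀ v ∈ eigenspace T (r : 𝕜), ⟪v, x⟫_𝕜 = 0) :
    m * ‖x‖ ^ 2 ≤ re ⟪x, T x⟫_𝕜 := by
  set b := hT.eigenvectorBasis rfl
  rw [hT.re_inner_apply_self_eq_sum rfl, ← b.sum_sq_norm_inner_right, Finset.mul_sum]
  refine Finset.sum_le_sum fun i _ => ?_
  by_cases hi : hT.eigenvalues rfl i < m
  · have : ⟪b i, x⟫_𝕜 = 0 := hx _ hi _ (hT.hasEigenvector_eigenvectorBasis rfl i).1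
    simp [b, this]
  · gcongr
    exact not_lt.mp hi

theorem re_inner_apply_self_le_mul_norm_sq (hT : T.IsSymmetric)
    {M : ℝ} (hM : ∀ r : ℝ, HasEigenvalue T (r : 𝕜) → r ≤ M) (x : E) :
    re ⟪x, T x⟫_𝕜 ≤ M * ‖x‖ ^ 2 := by
  rw [hT.re_inner_apply_self_eq_sum rfl, ← (hT.eigenvectorBasis rfl).sum_sq_norm_inner_right,
    Finset.mul_sum]
  exact Finset.sum_le_sum fun i _ => by gcongr; exact hM _ (hT.hasEigenvalue_eigenvalues rfl i)

theorem add_mul_le_re_inner_apply_self (hT : T.IsSymmetric) (hψ : ‖ψ‖ = 1)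
    (hground : T ψ = (E₀ : 𝕜) • ψ) (hnondeg : eigenspace T (E₀ : 𝕜) ≤ Submodule.span 𝕜 {ψ})
    {Em : ℝ} (hgap : ∀ r : ℝ, HasEigenvalue T (r : 𝕜) → r = E₀ ∨ Em ≤ r) (φ : E) :
    E₀ * ‖⟪ψ, φ⟫_𝕜‖ ^ 2 + Em * (‖φ‖ ^ 2 - ‖⟪ψ, φ⟫_𝕜‖ ^ 2) ≤ re ⟪φ, T φ⟫_𝕜 := by
  obtain ⟨χ, hφ, hχ, hnorm⟩ := exists_eq_inner_smul_add_orthogonal (𝕜 := 𝕜) hψ φ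
  have hχT : Em * ‖χ‖ ^ 2 ≤ re ⟪χ, T χ⟫_𝕜 := by
    refine hT.mul_norm_sq_le_re_inner_apply_self fun r hr v hv => ?_
    obtain rfl | hv0 := eq_or_ne v 0
    · exact inner_zero_left χ
    obtain rfl := (hgap r (hasEigenvalue_of_hasEigenvector ⟨hv, hv0⟩)).resolve_right hr.not_ge
    obtain ⟨c, rfl⟩ := Submodule.mem_span_singleton.mp (hnondeg hv)
    rw [inner_smul_left, hχ, mul_zero]
  rw [hφ, hT.re_inner_apply_self_smul_add hground hχ, hψ, ← hφ, hnorm]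
  linarith

theorem re_inner_apply_self_le_add_mul (hT : T.IsSymmetric) (hψ : ‖ψ‖ = 1)
    (hground : T ψ = (E₀ : 𝕜) • ψ) {Ep : ℝ} (hEp : ∀ r : ℝ, HasEigenvalue T (r : 𝕜) → r ≤ Ep)
    (φ : E) :
    re ⟪φ, T φ⟫_𝕜 ≤ E₀ * ‖⟪ψ, φ⟫_𝕜‖ ^ 2 + Ep * (‖φ‖ ^ 2 - ‖⟪ψ, φ⟫_𝕜‖ ^ 2) := by
  obtain ⟨χ, hφ, hχ, hnorm⟩ := exists_eq_inner_smul_add_orthogonal (𝕜 := 𝕜) hψ φ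
  have := hT.re_inner_apply_self_le_mul_norm_sq hEp χ
  rw [hφ, hT.re_inner_apply_self_smul_add hground hχ, hψ, ← hφ, hnorm]
  linarith

theorem sInf_le_re_inner_apply_self (hT : T.IsSymmetric) {p : E → Prop} {φ : E}
    (hφ : ‖φ‖ = 1) (hp : p φ) :
    sInf {e : ℝ | ∃ χ, ‖χ‖ = 1 ∧ p χ ∧ (e : 𝕜) = ⟪χ, T χ⟫_𝕜} ≤ re ⟪φ, T φ⟫_𝕜 := by
  refine csInf_le ⟨-‖LinearMap.toContinuousLinearMap T‖, ?_⟩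
    ⟨φ, hφ, hp, hT.coe_re_inner_self_apply φ⟩
  rintro e ⟨χ, hχ, -, he⟩
  have hχT : ‖⟪χ, T χ⟫_𝕜‖ ≤ ‖LinearMap.toContinuousLinearMap T‖ :=
    calc ‖⟪χ, T χ⟫_𝕜‖ ≤ ‖χ‖ * ‖LinearMap.toContinuousLinearMap T χ‖ := norm_inner_le_norm _ _
      _ ≤ ‖LinearMap.toContinuousLinearMap T‖ := by
        simpa [hχ] using (LinearMap.toContinuousLinearMap T).le_opNorm χ
  have : e = re ⟪χ, T χ⟫_𝕜 := by rw [← he, ofReal_re]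
  linarith [neg_le_of_abs_le ((abs_re_le_norm _).trans hχT)]

end LinearMap.IsSymmetric

theorem stmt_18_general {H : Type*} [NormedAddCommGroup H] [InnerProductSpace ℂ H]
    [FiniteDimensional ℂ H]
    (A : H →ₗ[ℂ] H) (hA : ∀ x y : H, ⟪A x, y⟫_ℂ = ⟪x, A y⟫_ℂ)
    (E₀ Em Ep : ℝ) (ψ₀ : H) (hψ₀ : ‖ψ₀‖ = 1)
    (hground : A ψ₀ = (E₀ : ℂ) • ψ₀)
    (hnondeg : Module.End.eigenspace A (E₀ : ℂ) = Submodule.span ℂ {ψ₀})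
    (hE₀min : ∀ c ∈ spectrum ℂ A, ∃ r : ℝ, c = (r : ℂ) ∧ E₀ ≤ r)
    (hE₀Em : E₀ < Em)
    (hEmmin : ∀ r : ℝ, (r : ℂ) ∈ spectrum ℂ A → E₀ < r → Em ≤ r)
    (hEpmem : (Ep : ℂ) ∈ spectrum ℂ A)
    (hEpmax : ∀ r : ℝ, (r : ℂ) ∈ spectrum ℂ A → r ≤ Ep)
    (P : H →ₗ[ℂ] H) (hPsym : ∀ x y : H, ⟪P x, y⟫_ℂ = ⟪x, P y⟫_ℂ)
    (hPidem : P ∘ₗ P = P)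
    (D₀ : ℝ) (hD₀ : 0 ≤ D₀) (hD₀1 : 2 * D₀ < 1)
    (hoverlapP : 1 - ‖P ψ₀‖ ^ 2 ≤ 2 * D₀)
    (φHF : H) (hφHF : ‖φHF‖ = 1)
    (S₀ : ℝ) (hS₀ : 0 < S₀) (N : ℕ) (hN : 0 < N)
    (hoverlapHF : S₀ / N ≤ 1 - ‖⟪ψ₀, φHF⟫_ℂ‖ ^ 2)
    (ED : ℝ)
    (hED : ED = sInf {e : ℝ | ∃ φ : H, ‖φ‖ = 1 ∧ P φ = φ ∧ (e : ℂ) = ⟪φ, A φ⟫_ℂ})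
    (eHF : ℝ) (heHF : (eHF : ℂ) = ⟪φHF, A φHF⟫_ℂ)
    (Ecorr : ℝ) (hEcorr : Ecorr = eHF - E₀) :
    (ED - E₀) / Ecorr ≤ 2 * N * (Ep - E₀) / (Em - E₀) * (D₀ / S₀) := by
  replace hA : A.IsSymmetric := hA
  replace hPsym : P.IsSymmetric := hPsym
  have hE₀le (r : ℝ) (hr : HasEigenvalue A (r : ℂ)) : E₀ ≤ r := by
    obtain ⟨s, hs, hE₀s⟩ := hE₀min _ hr.mem_spectrum
    exact (Complex.ofReal_injective hs).symm ▸ hE₀s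
  have hgap (r : ℝ) (hr : HasEigenvalue A (r : ℂ)) : r = E₀ ∨ Em ≤ r :=
    (hE₀le r hr).eq_or_lt.imp Eq.symm (hEmmin r hr.mem_spectrum)
  have hEp (r : ℝ) (hr : HasEigenvalue A (r : ℂ)) : r ≤ Ep := hEpmax r hr.mem_spectrum
  have hE₀Ep : E₀ ≤ Ep := hE₀le Ep (hasEigenvalue_iff_mem_spectrum.mpr hEpmem)
  have hPψ₀ : P ψ₀ ≠ 0 := fun h => by simp [h] at hoverlapP; linarith
  obtain ⟨φ, hφ, hPφ, hψ₀φ⟩ := hPsym.exists_norm_eq_one_apply_eq_self_norm_inner_eq hPidem hPψ₀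
  have hED_le : ED - E₀ ≤ (Ep - E₀) * (2 * D₀) := by
    have hED_φ := hED ▸ hA.sInf_le_re_inner_apply_self (p := fun φ => P φ = φ) hφ hPφ
    have hφ_up := hA.re_inner_apply_self_le_add_mul hψ₀ hground hEp φ
    rw [hφ, hψ₀φ] at hφ_up
    linarith [mul_le_mul_of_nonneg_left hoverlapP (sub_nonneg.2 hE₀Ep)]
  have hEcorr_ge : (Em - E₀) * (S₀ / N) ≤ Ecorr := by
    have hHF_low := hA.add_mul_le_re_inner_apply_self hψ₀ hground hnondeg.le hgap φHF
    rw [hφHF] at hHF_low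
    rw [hEcorr, show eHF = re ⟪φHF, A φHF⟫_ℂ by simp [← heHF]]
    linarith [mul_le_mul_of_nonneg_left hoverlapHF (sub_nonneg.2 hE₀Em.le)]
  calc (ED - E₀) / Ecorr ≤ (Ep - E₀) * (2 * D₀) / ((Em - E₀) * (S₀ / N)) :=
        div_le_div₀ (by positivity) hED_le
          (mul_pos (sub_pos.2 hE₀Em) (div_pos hS₀ (Nat.cast_pos.2 hN))) hEcorr_ge
    _ = 2 * N * (Ep - E₀) / (Em - E₀) * (D₀ / S₀) := by
        field_simp

theorem stmt_18 {H : Type*} [NormedAddCommGroup H] [InnerProductSpace ℂ H]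
    [FiniteDimensional ℂ H]
    (A : H →ₗ[ℂ] H) (hA : ∀ x y : H, ⟪A x, y⟫_ℂ = ⟪x, A y⟫_ℂ)
    (E₀ Em Ep : ℝ) (ψ₀ : H) (hψ₀ : ‖ψ₀‖ = 1)
    (hground : A ψ₀ = (E₀ : ℂ) • ψ₀)
    (hnondeg : Module.End.eigenspace A (E₀ : ℂ) = Submodule.span ℂ {ψ₀})
    (hE₀min : ∀ c ∈ spectrum ℂ A, ∃ r : ℝ, c = (r : ℂ) ∧ E₀ ≤ r)
    (hEmmem : (Em : ℂ) ∈ spectrum ℂ A) (hE₀Em : E₀ < Em)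
    (hEmmin : ∀ r : ℝ, (r : ℂ) ∈ spectrum ℂ A → E₀ < r → Em ≤ r)
    (hEpmem : (Ep : ℂ) ∈ spectrum ℂ A)
    (hEpmax : ∀ r : ℝ, (r : ℂ) ∈ spectrum ℂ A → r ≤ Ep)
    (P : H →ₗ[ℂ] H) (hPsym : ∀ x y : H, ⟪P x, y⟫_ℂ = ⟪x, P y⟫_ℂ)
    (hPidem : P ∘ₗ P = P)
    (D₀ : ℝ) (hD₀ : 0 ≤ D₀) (hD₀1 : 2 * D₀ < 1)
    (hoverlapP : 1 - ‖P ψ₀‖ ^ 2 ≤ 2 * D₀)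
    (φHF : H) (hφHF : ‖φHF‖ = 1)
    (S₀ : ℝ) (hS₀ : 0 < S₀) (N : ℕ) (hN : 0 < N)
    (hoverlapHF : S₀ / N ≤ 1 - ‖⟪ψ₀, φHF⟫_ℂ‖ ^ 2)
    (ED : ℝ)
    (hED : ED = sInf {e : ℝ | ∃ φ : H, ‖φ‖ = 1 ∧ P φ = φ ∧ (e : ℂ) = ⟪φ, A φ⟫_ℂ})
    (eHF : ℝ) (heHF : (eHF : ℂ) = ⟪φHF, A φHF⟫_ℂ)
    (Ecorr : ℝ) (hEcorr : Ecorr = eHF - E₀) (hEcorrpos : 0 < Ecorr) :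
    (ED - E₀) / Ecorr ≤ 2 * N * (Ep - E₀) / (Em - E₀) * (D₀ / S₀) :=
  stmt_18_general A hA E₀ Em Ep ψ₀ hψ₀ hground hnondeg hE₀min hE₀Em hEmmin hEpmem hEpmax P hPsym
    hPidem D₀ hD₀ hD₀1 hoverlapP φHF hφHF S₀ hS₀ N hN hoverlapHF ED hED eHF heHF Ecorr hEcorr
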